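/- Quadrangle construction of the polar: Let κ be a conic, assume Axiom P and Fano's axiom, and let P be a point lying outside κ (P is distinct from every point of κ). Let E₁, E₂, E₃, E₄ be four distinct points of κ forming a quadrangle inscribed in κ with P as one of its diagonal points, say P = E₁E₂·E₃E₄. Then the polar of P with respect to κ is the line joining the other two diagonal points E₁E₃·E₂E₄ and E₁E₄·E₂E₃. -/

import Mathlib

open Configuration

universe u
variable (P L : Type u) [Membership P L]

/-- Three points are collinear if some line passes through all three. -/
def Col (A B C : P) : Prop := ∃ l : L, A ∈ l ∧ B ∈ l ∧ C ∈ l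

/-- Every line of `L` is incident with at least `n` distinct points. -/
def LinesHaveAtLeast (n : ℕ) : Prop :=
  ∀ l : L, ∃ s : Finset P, n ≤ s.card ∧ ∀ X ∈ s, X ∈ l
/-- `IsTriangle A B C ab bc ca` : the points `A B C` form a triangle with sides
`ab = AB`, `bc = BC`, `ca = CA`; noncollinearity is expressed by each vertex
lying outside the opposite side. -/
def IsTriangle (A B C : P) (ab bc ca : L) : Prop :=
  A ∈ ab ∧ B ∈ ab ∧ B ∈ bc ∧ C ∈ bc ∧ C ∈ ca ∧ A ∈ ca ∧ A ∉ bc ∧ B ∉ ca ∧ C ∉ ab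

/-- Two triangles are distinct if corresponding vertices are distinct and
corresponding sides are distinct. -/
def DistinctTriangles (A B C A' B' C' : P) (ab bc ca ab' bc' ca' : L) : Prop :=
  A ≠ A' ∧ B ≠ B' ∧ C ≠ C' ∧ ab ≠ ab' ∧ bc ≠ bc' ∧ ca ≠ ca'

/-- Two triangles are perspective from the center `O` : the lines joining
corresponding vertices are concurrent at `O`, and `O` lies outside each of the
six sides. -/
def PerspectiveFromCenter (A B C A' B' C' : P) (ab bc ca ab' bc' ca' : L) (O : P) : Prop :=
  (∃ la : L, A ∈ la ∧ A' ∈ la ∧ O ∈ la) ∧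
  (∃ lb : L, B ∈ lb ∧ B' ∈ lb ∧ O ∈ lb) ∧
  (∃ lc : L, C ∈ lc ∧ C' ∈ lc ∧ O ∈ lc) ∧
  O ∉ ab ∧ O ∉ bc ∧ O ∉ ca ∧ O ∉ ab' ∧ O ∉ bc' ∧ O ∉ ca'

/-- Two triangles are perspective from the axis `l` : the intersection points of
corresponding sides lie on `l`, and `l` avoids each of the six vertices. -/
def PerspectiveFromAxis (A B C A' B' C' : P) (ab bc ca ab' bc' ca' : L) (l : L) : Prop :=
  (∃ X : P, X ∈ ab ∧ X ∈ ab' ∧ X ∈ l) ∧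
  (∃ Y : P, Y ∈ bc ∧ Y ∈ bc' ∧ Y ∈ l) ∧
  (∃ Z : P, Z ∈ ca ∧ Z ∈ ca' ∧ Z ∈ l) ∧
  A ∉ l ∧ B ∉ l ∧ C ∉ l ∧ A' ∉ l ∧ B' ∉ l ∧ C' ∉ l

/-- Desargues's property: two distinct triangles that are perspective from a
center are perspective from an axis. -/
def DesarguesProperty : Prop :=
  ∀ (A B C A' B' C' : P) (ab bc ca ab' bc' ca' : L) (O : P),
    IsTriangle P L A B C ab bc ca → IsTriangle P L A' B' C' ab' bc' ca' →
    DistinctTriangles P L A B C A' B' C' ab bc ca ab' bc' ca' →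
    PerspectiveFromCenter P L A B C A' B' C' ab bc ca ab' bc' ca' O →
    ∃ l : L, PerspectiveFromAxis P L A B C A' B' C' ab bc ca ab' bc' ca' l

/-- `D` is the harmonic conjugate `h(A,B;C)` of `C` with respect to the distinct
points `A`, `B` : choosing a line `l` through `C` with `l ≠ AB` and a point `R`
outside both `AB` and `l`, and setting `Pp = BR·l`, `Q = AR·l`, `S = AP·BQ`,
the point `D` is `AB·RS`.  (By the invariance theorem this is independent of
the choices of `l` and `R`.) -/
def IsHarmonic (A B C D : P) : Prop :=
  A ≠ B ∧ ∃ (ab l : L) (R Pp Q S : P),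
    A ∈ ab ∧ B ∈ ab ∧ C ∈ ab ∧ C ∈ l ∧ l ≠ ab ∧ R ∉ ab ∧ R ∉ l ∧
    Pp ∈ l ∧ Col P L B R Pp ∧ Q ∈ l ∧ Col P L A R Q ∧
    Col P L A Pp S ∧ Col P L B Q S ∧ D ∈ ab ∧ Col P L R S D

/-- Fano's axiom: the three diagonal points of any quadrangle (four points, no
three collinear) are noncollinear. -/
def FanoAxiom : Prop :=
  ∀ E₁ E₂ E₃ E₄ X Y Z : P,
    ¬ Col P L E₁ E₂ E₃ → ¬ Col P L E₁ E₂ E₄ → ¬ Col P L E₁ E₃ E₄ → ¬ Col P L E₂ E₃ E₄ →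
    Col P L E₁ E₂ X → Col P L E₃ E₄ X →
    Col P L E₁ E₃ Y → Col P L E₂ E₄ Y →
    Col P L E₁ E₄ Z → Col P L E₂ E₃ Z →
    ¬ Col P L X Y Z

/-- An object of the plane: the range of a line or the pencil of a point. -/
inductive Obj (P L : Type u) where
  | range : L → Obj P L
  | pencil : P → Obj P L

/-- The carrier of an object: the points on the line, resp. the lines through
the point. -/
abbrev Obj.Carrier {P L : Type u} [Membership P L] : Obj P L → Type u
  | .range l => {X : P // X ∈ l}
  | .pencil U => {k : L // U ∈ k}

/-- `f` is the perspectivity from the range of `l` to the range of `m` with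
center `O`, a point outside both `l` and `m` : each point `X` of `l` is mapped
to the point `(OX)·m`, i.e. `O`, `X` and `f X` are collinear. -/
def IsRangePersp (l m : L) (f : {X : P // X ∈ l} → {Y : P // Y ∈ m}) : Prop :=
  ∃ O : P, O ∉ l ∧ O ∉ m ∧
    ∀ X : {X : P // X ∈ l}, ∃ k : L, O ∈ k ∧ (X : P) ∈ k ∧ ((f X : P)) ∈ k

/-- `f` is the elementary map from the pencil of `U` to the range of a line `l`
not through `U` : each line `k` through `U` is sent to the point `k·l`. -/
def IsElemMap (U : P) (l : L) (f : {k : L // U ∈ k} → {X : P // X ∈ l}) : Prop :=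
  U ∉ l ∧ ∀ k : {k : L // U ∈ k}, ((f k : P)) ∈ (k : L)

/-- `f` is the elementary map from the range of a line `l` to the pencil of a
point `U` outside `l` : each point `X` of `l` is sent to the line `UX`. -/
def IsElemInv (U : P) (l : L) (f : {X : P // X ∈ l} → {k : L // U ∈ k}) : Prop :=
  U ∉ l ∧ ∀ X : {X : P // X ∈ l}, (X : P) ∈ ((f X : L))

/-- A projectivity (between ranges or pencils) : a composite of finitely many
perspectivities and elementary maps. -/
inductive IsProj : (a b : Obj P L) → (a.Carrier → b.Carrier) → Prop where
  | persp {l m : L} {f : {X : P // X ∈ l} → {Y : P // Y ∈ m}} :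
      IsRangePersp P L l m f → IsProj (.range l) (.range m) f
  | elem {U : P} {l : L} {f : {k : L // U ∈ k} → {X : P // X ∈ l}} :
      IsElemMap P L U l f → IsProj (.pencil U) (.range l) f
  | elemInv {U : P} {l : L} {f : {X : P // X ∈ l} → {k : L // U ∈ k}} :
      IsElemInv P L U l f → IsProj (.range l) (.pencil U) f
  | comp {a b c : Obj P L} {f : a.Carrier → b.Carrier} {g : b.Carrier → c.Carrier} :
      IsProj a b f → IsProj b c g → IsProj a c (g ∘ f)

/-- Axiom T: every projectivity of a range or a pencil onto itself having three
distinct fixed elements is the identity. -/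
def AxiomT : Prop :=
  ∀ (a : Obj P L) (f : a.Carrier → a.Carrier), IsProj P L a a f →
    (∃ x y z : a.Carrier, x ≠ y ∧ x ≠ z ∧ y ≠ z ∧ f x = x ∧ f y = y ∧ f z = z) →
    ∀ w, f w = w

/-- The Steiner conic `κ(π;U,V)` defined by a projectivity `π : U* → V*` :
the locus of points `l·π(l)` for `l` a line through `U`. -/
def conicSet (U V : P) (π : {k : L // U ∈ k} → {k : L // V ∈ k}) : Set P :=
  {X : P | ∃ k : {k : L // U ∈ k}, X ∈ (k : L) ∧ X ∈ ((π k : L))}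

/-- A conic: the Steiner conic of some nonperspective projectivity between the
pencils of two distinct points. -/
def IsConic (κ : Set P) : Prop :=
  ∃ (U V : P) (π : {k : L // U ∈ k} → {k : L // V ∈ k}),
    U ≠ V ∧ IsProj P L (.pencil U) (.pencil V) π ∧
    (∀ k : {k : L // U ∈ k}, ((π k : L)) ≠ (k : L)) ∧
    κ = conicSet P L U V π

/-- A line `t` is tangent to `κ` at `Q` if `Q` is on `κ` and on `t`, and is the
only point of `κ` incident with `t`. -/
def IsTangent (κ : Set P) (t : L) (Q : P) : Prop :=
  Q ∈ κ ∧ Q ∈ t ∧ ∀ X ∈ κ, X ∈ t → X = Q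

/-- A line is a secant of `κ` if it passes through two distinct points of `κ`. -/
def IsSecant (κ : Set P) (s : L) : Prop :=
  ∃ X Y : P, X ≠ Y ∧ X ∈ κ ∧ Y ∈ κ ∧ X ∈ s ∧ Y ∈ s

/-- Axiom P: the tangents to a conic at any three distinct points of the conic
are nonconcurrent. -/
def AxiomP : Prop :=
  ∀ κ : Set P, IsConic P L κ →
    ∀ X Y Z : P, X ∈ κ → Y ∈ κ → Z ∈ κ → X ≠ Y → X ≠ Z → Y ≠ Z →
      ∀ tx ty tz : L, IsTangent P L κ tx X → IsTangent P L κ ty Y → IsTangent P L κ tz Z →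
        ¬ ∃ W : P, W ∈ tx ∧ W ∈ ty ∧ W ∈ tz

/-- The polar of a point `Pt` with respect to a conic `κ` : the line `QQ'`
obtained from a secant `q` of `κ` through `Pt`, where `q` meets `κ` at the
distinct points `Q₁, Q₂`, with tangents `q₁, q₂`, `Q = q₁·q₂`, and
`Q' = h(Q₁,Q₂;Pt)`.  (This is independent of the choice of the secant `q`.) -/
def IsPolar (κ : Set P) (Pt : P) (p : L) : Prop :=
  ∃ (q q₁ q₂ : L) (Q₁ Q₂ Q Q' : P),
    Pt ∈ q ∧ Q₁ ≠ Q₂ ∧ Q₁ ∈ κ ∧ Q₂ ∈ κ ∧ Q₁ ∈ q ∧ Q₂ ∈ q ∧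
    IsTangent P L κ q₁ Q₁ ∧ IsTangent P L κ q₂ Q₂ ∧
    Q ∈ q₁ ∧ Q ∈ q₂ ∧ IsHarmonic P L Q₁ Q₂ Pt Q' ∧
    Q ≠ Q' ∧ Q ∈ p ∧ Q' ∈ p

/-!
The polar is computed along the secant `E₁E₂`. The harmonic conjugate `h(E₁,E₂;Pt)` is read off
the quadrangle itself: the construction with `l = E₃E₄` and `R = D₁` produces `E₁E₂·D₁D₂`.
For the other point, Steiner's theorem presents `κ` by a projectivity `σ : E₁* → E₂*`, whose
tangents at `E₁` and `E₂` are `σ⁻¹(E₁E₂)` and `σ(E₁E₂)`. The projectivity `Z ↦ σ(E₁Z)·E₁E₃`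
from `E₂E₃` to `E₁E₃` fixes `E₃`, so by Axiom T it is a perspectivity; its centre lies on both
tangents and, as `D₂ ↦ D₁`, on `D₁D₂`. Fano's axiom gives `D₁ ≠ D₂`.

Steiner's theorem (moving a base point of the presentation along the conic) rests on the
invariance of the harmonic quadrangle construction, which is where Desargues's property enters.
-/

open HasLines HasPoints

section Incidence

variable {P L}

theorem LinesHaveAtLeast.mono {m n : ℕ} (h : LinesHaveAtLeast P L n) (hmn : m ≤ n) :
    LinesHaveAtLeast P L m := fun l =>
  let ⟨s, hs, hsl⟩ := h l
  ⟨s, hmn.trans hs, hsl⟩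

theorem LinesHaveAtLeast.exists_mem_notMem {n : ℕ} (h : LinesHaveAtLeast P L n) (l : L)
    (s : Finset P) (hs : s.card < n) : ∃ X ∈ l, X ∉ s := by
  classical
  obtain ⟨t, ht, htl⟩ := h l
  obtain ⟨X, hX⟩ : (t \ s).Nonempty := by
    rw [← Finset.card_pos]; have := Finset.le_card_sdiff s t; omega
  exact ⟨X, htl X (Finset.mem_sdiff.1 hX).1, (Finset.mem_sdiff.1 hX).2⟩

variable [ProjectivePlane P L]

theorem line_unique {A B : P} {l m : L} (hAB : A ≠ B) (hAl : A ∈ l) (hBl : B ∈ l)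
    (hAm : A ∈ m) (hBm : B ∈ m) : l = m :=
  (Nondegenerate.eq_or_eq hAl hBl hAm hBm).resolve_left hAB

theorem point_unique {A B : P} {l m : L} (hlm : l ≠ m) (hAl : A ∈ l) (hAm : A ∈ m)
    (hBl : B ∈ l) (hBm : B ∈ m) : A = B :=
  (Nondegenerate.eq_or_eq hAl hBl hAm hBm).resolve_right hlm

theorem exists_line {A B : P} (hAB : A ≠ B) : ∃ l : L, A ∈ l ∧ B ∈ l :=
  (existsUnique_line P L A B hAB).exists

theorem exists_point {l m : L} (hlm : l ≠ m) : ∃ X : P, X ∈ l ∧ X ∈ m :=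
  (existsUnique_point P L l m hlm).exists

theorem Col.mem_right {A B C : P} {l : L} (h : Col P L A B C) (hAB : A ≠ B)
    (hA : A ∈ l) (hB : B ∈ l) : C ∈ l := by
  obtain ⟨m, hAm, hBm, hCm⟩ := h
  rwa [line_unique hAB hAm hBm hA hB] at hCm

theorem Col.mem_mid {A B C : P} {l : L} (h : Col P L A B C) (hAC : A ≠ C)
    (hA : A ∈ l) (hC : C ∈ l) : B ∈ l := by
  obtain ⟨m, hAm, hBm, hCm⟩ := h
  rwa [line_unique hAC hAm hCm hA hC] at hBm

theorem Col.mem_left {A B C : P} {l : L} (h : Col P L A B C) (hBC : B ≠ C)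
    (hB : B ∈ l) (hC : C ∈ l) : A ∈ l := by
  obtain ⟨m, hAm, hBm, hCm⟩ := h
  rwa [line_unique hBC hBm hCm hB hC] at hAm

end Incidence

section Projectivity

variable {P L} [ProjectivePlane P L] {U O : P} {l m : L}

def pencilMeet (hU : U ∉ l) (k : {k : L // U ∈ k}) : {X : P // X ∈ l} :=
  ⟨mkPoint (ne_of_mem_of_not_mem' k.2 hU), (mkPoint_ax _).2⟩

def rangeJoin (hU : U ∉ l) (X : {X : P // X ∈ l}) : {k : L // U ∈ k} :=
  ⟨mkLine (ne_of_mem_of_not_mem X.2 hU).symm, (mkLine_ax _).1⟩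

theorem mem_pencilMeet (hU : U ∉ l) (k : {k : L // U ∈ k}) : (pencilMeet hU k : P) ∈ (k : L) :=
  (mkPoint_ax _).1

theorem mem_rangeJoin (hU : U ∉ l) (X : {X : P // X ∈ l}) : (X : P) ∈ (rangeJoin hU X : L) :=
  (mkLine_ax _).2

theorem pencilMeet_eq (hU : U ∉ l) {k : {k : L // U ∈ k}} {X : P} (hXk : X ∈ (k : L))
    (hXl : X ∈ l) : pencilMeet hU k = ⟨X, hXl⟩ :=
  Subtype.ext <| point_unique (ne_of_mem_of_not_mem' k.2 hU) (mem_pencilMeet hU k)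
    (pencilMeet hU k).2 hXk hXl

theorem rangeJoin_eq (hU : U ∉ l) {X : {X : P // X ∈ l}} {k : L} (hUk : U ∈ k)
    (hXk : (X : P) ∈ k) : rangeJoin hU X = ⟨k, hUk⟩ :=
  Subtype.ext <| line_unique (ne_of_mem_of_not_mem X.2 hU).symm (rangeJoin hU X).2
    (mem_rangeJoin hU X) hUk hXk

theorem isProj_pencilMeet (hU : U ∉ l) : IsProj P L (.pencil U) (.range l) (pencilMeet hU) :=
  .elem ⟨hU, mem_pencilMeet hU⟩

theorem isProj_rangeJoin (hU : U ∉ l) : IsProj P L (.range l) (.pencil U) (rangeJoin hU) :=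
  .elemInv ⟨hU, mem_rangeJoin hU⟩

def rangePersp (hOl : O ∉ l) (hOm : O ∉ m) : {X : P // X ∈ l} → {Y : P // Y ∈ m} :=
  pencilMeet hOm ∘ rangeJoin hOl

def pencilPersp (hUl : U ∉ l) (hOl : O ∉ l) : {k : L // U ∈ k} → {k : L // O ∈ k} :=
  rangeJoin hOl ∘ pencilMeet hUl

theorem isProj_rangePersp (hOl : O ∉ l) (hOm : O ∉ m) :
    IsProj P L (.range l) (.range m) (rangePersp hOl hOm) :=
  .comp (isProj_rangeJoin hOl) (isProj_pencilMeet hOm)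

theorem isProj_pencilPersp (hUl : U ∉ l) (hOl : O ∉ l) :
    IsProj P L (.pencil U) (.pencil O) (pencilPersp hUl hOl) :=
  .comp (isProj_pencilMeet hUl) (isProj_rangeJoin hOl)

theorem rangePersp_eq (hOl : O ∉ l) (hOm : O ∉ m) {X : {X : P // X ∈ l}} {Y : P} {k : L}
    (hOk : O ∈ k) (hXk : (X : P) ∈ k) (hYk : Y ∈ k) (hYm : Y ∈ m) :
    rangePersp hOl hOm X = ⟨Y, hYm⟩ := by
  rw [rangePersp, Function.comp_apply, rangeJoin_eq hOl hOk hXk]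
  exact pencilMeet_eq hOm hYk hYm

theorem col_rangePersp (hOl : O ∉ l) (hOm : O ∉ m) (X : {X : P // X ∈ l}) :
    Col P L O X (rangePersp hOl hOm X) :=
  ⟨_, (rangeJoin hOl X).2, mem_rangeJoin hOl X, mem_pencilMeet hOm _⟩

theorem rangePersp_rangePersp (hOl : O ∉ l) (hOm : O ∉ m) (X : {X : P // X ∈ l}) :
    rangePersp hOm hOl (rangePersp hOl hOm X) = X :=
  rangePersp_eq hOm hOl (rangeJoin hOl X).2 (mem_pencilMeet hOm _) (mem_rangeJoin hOl X) X.2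

theorem pencilPersp_eq (hUl : U ∉ l) (hOl : O ∉ l) {k : {k : L // U ∈ k}} {X : P} {k' : L}
    (hXk : X ∈ (k : L)) (hXl : X ∈ l) (hOk' : O ∈ k') (hXk' : X ∈ k') :
    pencilPersp hUl hOl k = ⟨k', hOk'⟩ := by
  rw [pencilPersp, Function.comp_apply, pencilMeet_eq hUl hXk hXl]
  exact rangeJoin_eq hOl hOk' hXk'

theorem exists_mem_pencilPersp (hUl : U ∉ l) (hOl : O ∉ l) (k : {k : L // U ∈ k}) :
    ∃ X : P, X ∈ (k : L) ∧ X ∈ l ∧ X ∈ (pencilPersp hUl hOl k : L) :=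
  ⟨_, mem_pencilMeet hUl k, (pencilMeet hUl k).2, mem_rangeJoin hOl _⟩

theorem pencilPersp_eq_self (hUl : U ∉ l) (hOl : O ∉ l) {k : {k : L // U ∈ k}}
    (hOk : O ∈ (k : L)) : pencilPersp hUl hOl k = ⟨k, hOk⟩ :=
  pencilPersp_eq hUl hOl (mem_pencilMeet hUl k) (pencilMeet hUl k).2 hOk (mem_pencilMeet hUl k)

namespace IsProj

theorem exists_inverse {a b : Obj P L} {f : a.Carrier → b.Carrier} (h : IsProj P L a b f) :
    ∃ g, IsProj P L b a g ∧ Function.LeftInverse g f ∧ Function.RightInverse g f := by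
  induction h with
  | @persp l m f hf =>
    obtain ⟨O, hOl, hOm, hf⟩ := hf
    obtain rfl : f = rangePersp hOl hOm := funext fun X =>
      let ⟨_, hOk, hXk, hfXk⟩ := hf X
      (rangePersp_eq hOl hOm hOk hXk hfXk (f X).2).symm
    exact ⟨rangePersp hOm hOl, isProj_rangePersp hOm hOl, rangePersp_rangePersp hOl hOm,
      rangePersp_rangePersp hOm hOl⟩
  | @elem U l f hf =>
    obtain ⟨hUl, hf⟩ := hf
    obtain rfl : f = pencilMeet hUl := funext fun k => (pencilMeet_eq hUl (hf k) (f k).2).symm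
    exact ⟨rangeJoin hUl, isProj_rangeJoin hUl,
      fun k => rangeJoin_eq hUl k.2 (mem_pencilMeet hUl k),
      fun X => pencilMeet_eq hUl (mem_rangeJoin hUl X) X.2⟩
  | @elemInv U l f hf =>
    obtain ⟨hUl, hf⟩ := hf
    obtain rfl : f = rangeJoin hUl := funext fun X => (rangeJoin_eq hUl (f X).2 (hf X)).symm
    exact ⟨pencilMeet hUl, isProj_pencilMeet hUl,
      fun X => pencilMeet_eq hUl (mem_rangeJoin hUl X) X.2,
      fun k => rangeJoin_eq hUl k.2 (mem_pencilMeet hUl k)⟩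
  | comp _ _ ih₁ ih₂ =>
    obtain ⟨g₁, hg₁, hl₁, hr₁⟩ := ih₁
    obtain ⟨g₂, hg₂, hl₂, hr₂⟩ := ih₂
    exact ⟨g₁ ∘ g₂, .comp hg₂ hg₁, hl₂.comp hl₁, hr₂.comp hr₁⟩

theorem injective {a b : Obj P L} {f : a.Carrier → b.Carrier} (h : IsProj P L a b f) :
    Function.Injective f :=
  let ⟨_, _, hl, _⟩ := h.exists_inverse
  hl.injective

theorem surjective {a b : Obj P L} {f : a.Carrier → b.Carrier} (h : IsProj P L a b f) :
    Function.Surjective f :=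
  let ⟨_, _, _, hr⟩ := h.exists_inverse
  hr.surjective

end IsProj

end Projectivity

section AxiomT

variable {P L} [ProjectivePlane P L]

/-- The centre is `O = Xf(X)·Yf(Y)` for two further points `X, Y` of `p`: the perspectivity from
`O` back to `p`, composed with `f`, fixes `X`, `Y` and `C`, so it is the identity by Axiom T. -/
theorem IsProj.isRangePersp_of_fixed (hT : AxiomT P L) (h3 : LinesHaveAtLeast P L 3)
    {p q : L} (hpq : p ≠ q) {f : {X : P // X ∈ p} → {Y : P // Y ∈ q}}
    (hf : IsProj P L (.range p) (.range q) f) {C : P} (hCp : C ∈ p) (hCq : C ∈ q)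
    (hfC : (f ⟨C, hCp⟩ : P) = C) : IsRangePersp P L p q f := by
  classical
  have hf_notMem : ∀ X : {X : P // X ∈ p}, (X : P) ≠ C → (f X : P) ∉ p := fun X hXC hfX =>
    hXC <| congrArg Subtype.val <| hf.injective <| Subtype.ext <|
      (point_unique hpq hfX (f X).2 hCp hCq).trans hfC.symm
  obtain ⟨X, hXp, hX⟩ := h3.exists_mem_notMem p {C} (by simp)
  obtain ⟨Y, hYp, hY⟩ := h3.exists_mem_notMem p {C, X} (Finset.card_le_two.trans_lt (by simp))
  simp only [Finset.mem_insert, Finset.mem_singleton, not_or] at hX hY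
  obtain ⟨hYC, hYX⟩ := hY
  set X' : {X : P // X ∈ p} := ⟨X, hXp⟩
  set Y' : {X : P // X ∈ p} := ⟨Y, hYp⟩
  obtain ⟨lX, hXlX, hfXlX⟩ := exists_line (L := L) (ne_of_mem_of_not_mem hXp (hf_notMem X' hX))
  obtain ⟨lY, hYlY, hfYlY⟩ := exists_line (L := L) (ne_of_mem_of_not_mem hYp (hf_notMem Y' hYC))
  have hlXp : lX ≠ p := fun h => hf_notMem X' hX (h ▸ hfXlX)
  have hlYp : lY ≠ p := fun h => hf_notMem Y' hYC (h ▸ hfYlY)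
  have hlXlY : lX ≠ lY := fun h => hYX (point_unique hlYp hYlY hYp (h ▸ hXlX) hXp)
  obtain ⟨O, hOlX, hOlY⟩ := exists_point (P := P) hlXlY
  have hOp : O ∉ p := fun hOp =>
    hYX ((point_unique hlYp hOlY hOp hYlY hYp).symm.trans (point_unique hlXp hOlX hOp hXlX hXp))
  have hOq : O ∉ q := by
    intro hOq
    have hlXq : lX ≠ q := fun h => hX (point_unique hpq hXp (h ▸ hXlX) hCp hCq)
    have hlYq : lY ≠ q := fun h => hYC (point_unique hpq hYp (h ▸ hYlY) hCp hCq)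
    have hfYX : f Y' = f X' := Subtype.ext <|
      (point_unique hlYq hOlY hOq hfYlY (f Y').2).symm.trans
        (point_unique hlXq hOlX hOq hfXlX (f X').2)
    exact hYX (congrArg Subtype.val (hf.injective hfYX))
  have hOC : O ≠ C := fun h => hOp (h ▸ hCp)
  obtain ⟨lC, hOlC, hClC⟩ := exists_line (L := L) hOC
  have hid := hT (.range p) (rangePersp hOq hOp ∘ f) (.comp hf (isProj_rangePersp hOq hOp))
    ⟨X', Y', ⟨C, hCp⟩, fun h => hYX (congrArg Subtype.val h).symm,
      fun h => hX (congrArg Subtype.val h), fun h => hYC (congrArg Subtype.val h),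
      rangePersp_eq hOq hOp hOlX hfXlX hXlX hXp, rangePersp_eq hOq hOp hOlY hfYlY hYlY hYp,
      rangePersp_eq hOq hOp hOlC (by rwa [hfC]) hClC hCp⟩
  refine ⟨O, hOp, hOq, fun W => ?_⟩
  obtain ⟨k, hOk, hfWk, hWk⟩ := col_rangePersp hOq hOp (f W)
  exact ⟨k, hOk, hid W ▸ hWk, hfWk⟩

end AxiomT

section Harmonic

variable {P L} {n l : L} {U V : P}

/-- The construction of `IsHarmonic` with the lines `n = UV` and `l` fixed: from the auxiliary
point `R` it builds `Pp = VR·l`, `Q = UR·l`, `S = UPp·VQ` and outputs `D = n·RS`. -/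
def QuadrangleOutput (n l : L) (U V R D : P) : Prop :=
  R ∉ n ∧ R ∉ l ∧ D ∈ n ∧ ∃ Pp Q S : P, Pp ∈ l ∧ Col P L V R Pp ∧ Q ∈ l ∧ Col P L U R Q ∧
    Col P L U Pp S ∧ Col P L V Q S ∧ Col P L R S D

theorem QuadrangleOutput.symm {R D : P} (h : QuadrangleOutput n l U V R D) :
    QuadrangleOutput n l V U R D :=
  let ⟨hRn, hRl, hDn, Pp, Q, S, hPl, hPc, hQl, hQc, hSP, hSQ, hDc⟩ := h
  ⟨hRn, hRl, hDn, Q, Pp, S, hQl, hQc, hPl, hPc, hSQ, hSP, hDc⟩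

variable [ProjectivePlane P L]

theorem exists_quadrangleOutput (hUV : U ≠ V) (hUn : U ∈ n) (hVn : V ∈ n) (hUl : U ∉ l)
    (hVl : V ∉ l) {R : P} (hRn : R ∉ n) (hRl : R ∉ l) : ∃ D, QuadrangleOutput n l U V R D := by
  obtain ⟨vr, hVvr, hRvr⟩ := exists_line (L := L) (ne_of_mem_of_not_mem hVn hRn)
  obtain ⟨ur, hUur, hRur⟩ := exists_line (L := L) (ne_of_mem_of_not_mem hUn hRn)
  have hvrn : vr ≠ n := ne_of_mem_of_not_mem' hRvr hRn
  obtain ⟨Pp, hPvr, hPl⟩ := exists_point (P := P) (ne_of_mem_of_not_mem' hRvr hRl)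
  obtain ⟨Q, hQur, hQl⟩ := exists_point (P := P) (ne_of_mem_of_not_mem' hRur hRl)
  obtain ⟨up, hUup, hPup⟩ := exists_line (L := L) (ne_of_mem_of_not_mem hPl hUl).symm
  obtain ⟨vq, hVvq, hQvq⟩ := exists_line (L := L) (ne_of_mem_of_not_mem hQl hVl).symm
  have hupvq : up ≠ vq := fun h =>
    hVl (point_unique hvrn hPvr (line_unique hUV hUup (h ▸ hVvq) hUn hVn ▸ hPup) hVvr hVn ▸ hPl)
  obtain ⟨S, hSup, hSvq⟩ := exists_point (P := P) hupvq
  have hRS : R ≠ S := by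
    rintro rfl
    have hupvr : up = vr := line_unique (ne_of_mem_of_not_mem hPl hRl).symm hSup hPup hRvr hPvr
    exact hRn (line_unique hUV (hupvr ▸ hUup) hVvr hUn hVn ▸ hRvr)
  obtain ⟨rs, hRrs, hSrs⟩ := exists_line (L := L) hRS
  obtain ⟨D, hDrs, hDn⟩ := exists_point (P := P) (ne_of_mem_of_not_mem' hRrs hRn)
  exact ⟨D, hRn, hRl, hDn, Pp, Q, S, hPl, ⟨vr, hVvr, hRvr, hPvr⟩, hQl, ⟨ur, hUur, hRur, hQur⟩,
    ⟨up, hUup, hPup, hSup⟩, ⟨vq, hVvq, hQvq, hSvq⟩, ⟨rs, hRrs, hSrs, hDrs⟩⟩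

theorem isTriangle_of_quadrangle (hUV : U ≠ V) (hUn : U ∈ n) (hVn : V ∈ n) (hUl : U ∉ l)
    (hVl : V ∉ l) {R Pp Q S : P} {vr up rs ur vq : L} (hRn : R ∉ n) (hRl : R ∉ l)
    (hPl : Pp ∈ l) (hQl : Q ∈ l) (hVvr : V ∈ vr) (hRvr : R ∈ vr) (hPvr : Pp ∈ vr)
    (hUup : U ∈ up) (hPup : Pp ∈ up) (hSup : S ∈ up) (hRrs : R ∈ rs) (hSrs : S ∈ rs)
    (hUur : U ∈ ur) (hRur : R ∈ ur) (hQur : Q ∈ ur) (hVvq : V ∈ vq) (hQvq : Q ∈ vq)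
    (hSvq : S ∈ vq) :
    IsTriangle P L R Pp S vr up rs ∧ Q ∉ vr ∧ Q ∉ up ∧ Q ∉ rs ∧ S ∉ ur := by
  have hvrn : vr ≠ n := ne_of_mem_of_not_mem' hRvr hRn
  have hurn : ur ≠ n := ne_of_mem_of_not_mem' hRur hRn
  have hRP : R ≠ Pp := ne_of_mem_of_not_mem hPl hRl |>.symm
  have hRQ : R ≠ Q := ne_of_mem_of_not_mem hQl hRl |>.symm
  have hurvr : ur ≠ vr := fun h => hurn (line_unique hUV hUur (h ▸ hVvr) hUn hVn)
  have hPQ : Pp ≠ Q := fun h => hRl (point_unique hurvr.symm hRvr hRur (h ▸ hPvr) hQur ▸ hQl)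
  have hQvr : Q ∉ vr := fun h => hPQ (point_unique (ne_of_mem_of_not_mem' hRvr hRl) hPvr hPl h hQl)
  have hQup : Q ∉ up := fun h => hPQ (point_unique (ne_of_mem_of_not_mem' hUup hUl) hPup hPl h hQl)
  have hSvr : S ∉ vr := by
    intro hSvr
    have hSV : S = V := point_unique (ne_of_mem_of_not_mem' hQvq hQvr).symm hSvr hSvq hVvr hVvq
    have hupn : up = n := line_unique hUV hUup (hSV ▸ hSup) hUn hVn
    exact hVl (point_unique hvrn hPvr (hupn ▸ hPup) hVvr hVn ▸ hPl)
  have hRup : R ∉ up := fun h =>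
    hvrn (line_unique hUV (line_unique hRP h hPup hRvr hPvr ▸ hUup) hVvr hUn hVn)
  have hPrs : Pp ∉ rs := fun h => hSvr (line_unique hRP hRrs h hRvr hPvr ▸ hSrs)
  have hSur : S ∉ ur := by
    intro hSur
    by_cases hSQ : S = Q
    · exact hQup (hSQ ▸ hSup)
    · exact hurn (line_unique hUV hUur (line_unique hSQ hSvq hQvq hSur hQur ▸ hVvq) hUn hVn)
  have hQrs : Q ∉ rs := fun h => hSur (line_unique hRQ hRrs h hRur hQur ▸ hSrs)
  exact ⟨⟨hRvr, hPvr, hPup, hSup, hSrs, hRrs, hRup, hPrs, hSvr⟩, hQvr, hQup, hQrs, hSur⟩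

theorem QuadrangleOutput.eq_of_same (hUV : U ≠ V) (hUn : U ∈ n) (hVn : V ∈ n) (hUl : U ∉ l)
    (hVl : V ∉ l) {R D₁ D₂ : P} (h₁ : QuadrangleOutput n l U V R D₁)
    (h₂ : QuadrangleOutput n l U V R D₂) : D₁ = D₂ := by
  obtain ⟨hRn, hRl, hD₁n, P₁, Q₁, S₁, hP₁l, ⟨vr, hVvr, hRvr, hP₁vr⟩, hQ₁l, ⟨ur, hUur, hRur, hQ₁ur⟩,
    ⟨up, hUup, hP₁up, hS₁up⟩, ⟨vq, hVvq, hQ₁vq, hS₁vq⟩, ⟨rs, hRrs, hS₁rs, hD₁rs⟩⟩ := h₁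
  obtain ⟨-, -, hD₂n, P₂, Q₂, S₂, hP₂l, hP₂c, hQ₂l, hQ₂c, hS₂P, hS₂Q, hD₂c⟩ := h₂
  obtain ⟨-, -, hQup, -, hS₁ur⟩ := isTriangle_of_quadrangle hUV hUn hVn hUl hVl hRn hRl hP₁l
    hQ₁l hVvr hRvr hP₁vr hUup hP₁up hS₁up hRrs hS₁rs hUur hRur hQ₁ur hVvq hQ₁vq hS₁vq
  obtain rfl : P₁ = P₂ := point_unique (ne_of_mem_of_not_mem' hRvr hRl) hP₁vr hP₁l
    (hP₂c.mem_right (ne_of_mem_of_not_mem hVn hRn) hVvr hRvr) hP₂l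
  obtain rfl : Q₁ = Q₂ := point_unique (ne_of_mem_of_not_mem' hRur hRl) hQ₁ur hQ₁l
    (hQ₂c.mem_right (ne_of_mem_of_not_mem hUn hRn) hUur hRur) hQ₂l
  obtain rfl : S₁ = S₂ := point_unique (ne_of_mem_of_not_mem' hQ₁vq hQup).symm hS₁up hS₁vq
    (hS₂P.mem_right (ne_of_mem_of_not_mem hP₁l hUl).symm hUup hP₁up)
    (hS₂Q.mem_right (ne_of_mem_of_not_mem hQ₁l hVl).symm hVvq hQ₁vq)
  exact point_unique (ne_of_mem_of_not_mem' hRrs hRn) hD₁rs hD₁n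
    (hD₂c.mem_right (ne_of_mem_of_not_mem hRur hS₁ur) hRrs hS₁rs) hD₂n

/-- Moving the auxiliary point along a line through `U` does not change the output: the two
triangles `R Pp S` are perspective from `Q = UR·l`, and Desargues puts `V`, `U` and the two
outputs on one axis. -/
theorem QuadrangleOutput.eq_of_col (hdes : DesarguesProperty P L) (hUV : U ≠ V) (hUn : U ∈ n)
    (hVn : V ∈ n) (hUl : U ∉ l) (hVl : V ∉ l) {R₁ R₂ D₁ D₂ : P}
    (h₁ : QuadrangleOutput n l U V R₁ D₁) (h₂ : QuadrangleOutput n l U V R₂ D₂)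
    (hcol : Col P L U R₁ R₂) : D₁ = D₂ := by
  by_cases hR : R₁ = R₂
  · subst hR
    exact h₁.eq_of_same hUV hUn hVn hUl hVl h₂
  obtain ⟨hR₁n, hR₁l, hD₁n, P₁, Q₁, S₁, hP₁l, ⟨vr₁, hVvr₁, hR₁vr₁, hP₁vr₁⟩, hQ₁l,
    ⟨ur, hUur, hR₁ur, hQ₁ur⟩, ⟨up₁, hUup₁, hP₁up₁, hS₁up₁⟩, ⟨vq, hVvq, hQvq, hS₁vq⟩,
    ⟨rs₁, hR₁rs₁, hS₁rs₁, hD₁rs₁⟩⟩ := h₁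
  obtain ⟨hR₂n, hR₂l, hD₂n, P₂, Q₂, S₂, hP₂l, ⟨vr₂, hVvr₂, hR₂vr₂, hP₂vr₂⟩, hQ₂l, hQ₂c,
    ⟨up₂, hUup₂, hP₂up₂, hS₂up₂⟩, hS₂c, ⟨rs₂, hR₂rs₂, hS₂rs₂, hD₂rs₂⟩⟩ := h₂
  have hR₂ur : R₂ ∈ ur := hcol.mem_right (ne_of_mem_of_not_mem hUn hR₁n) hUur hR₁ur
  obtain rfl : Q₁ = Q₂ := point_unique (ne_of_mem_of_not_mem' hR₁ur hR₁l) hQ₁ur hQ₁l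
    (hQ₂c.mem_right (ne_of_mem_of_not_mem hUn hR₂n) hUur hR₂ur) hQ₂l
  have hS₂vq : S₂ ∈ vq := hS₂c.mem_right (ne_of_mem_of_not_mem hQ₁l hVl).symm hVvq hQvq
  obtain ⟨hT₁, hQvr₁, hQup₁, hQrs₁, hS₁ur⟩ := isTriangle_of_quadrangle hUV hUn hVn hUl hVl
    hR₁n hR₁l hP₁l hQ₁l hVvr₁ hR₁vr₁ hP₁vr₁ hUup₁ hP₁up₁ hS₁up₁ hR₁rs₁ hS₁rs₁ hUur hR₁ur hQ₁ur
    hVvq hQvq hS₁vq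
  obtain ⟨hT₂, hQvr₂, hQup₂, hQrs₂, hS₂ur⟩ := isTriangle_of_quadrangle hUV hUn hVn hUl hVl
    hR₂n hR₂l hP₂l hQ₁l hVvr₂ hR₂vr₂ hP₂vr₂ hUup₂ hP₂up₂ hS₂up₂ hR₂rs₂ hS₂rs₂ hUur hR₂ur hQ₁ur
    hVvq hQvq hS₂vq
  have hvr₁ur : vr₁ ≠ ur := ne_of_mem_of_not_mem' hQ₁ur hQvr₁ |>.symm
  have hup₁l : up₁ ≠ l := ne_of_mem_of_not_mem' hUup₁ hUl
  have hP : P₁ ≠ P₂ := by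
    rintro rfl
    have hvr : vr₁ = vr₂ := line_unique (ne_of_mem_of_not_mem hP₁l hVl).symm hVvr₁ hP₁vr₁
      hVvr₂ hP₂vr₂
    exact hR (point_unique hvr₁ur hR₁vr₁ hR₁ur (hvr ▸ hR₂vr₂) hR₂ur)
  have hvr : vr₁ ≠ vr₂ := fun h =>
    hP (point_unique (ne_of_mem_of_not_mem' hR₁vr₁ hR₁l) hP₁vr₁ hP₁l (h ▸ hP₂vr₂) hP₂l)
  have hup : up₁ ≠ up₂ := fun h => hP (point_unique hup₁l hP₁up₁ hP₁l (h ▸ hP₂up₂) hP₂l)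
  have hS : S₁ ≠ S₂ := by
    rintro rfl
    exact hup (line_unique (ne_of_mem_of_not_mem hUur hS₁ur) hUup₁ hS₁up₁ hUup₂ hS₂up₂)
  have hrs : rs₁ ≠ rs₂ := fun h => hS₁ur (line_unique hR hR₁rs₁ (h ▸ hR₂rs₂) hR₁ur hR₂ur ▸ hS₁rs₁)
  obtain ⟨ax, ⟨X, hXvr₁, hXvr₂, hXax⟩, ⟨Y, hYup₁, hYup₂, hYax⟩, ⟨Z, hZrs₁, hZrs₂, hZax⟩, -⟩ :=
    hdes R₁ P₁ S₁ R₂ P₂ S₂ vr₁ up₁ rs₁ vr₂ up₂ rs₂ Q₁ hT₁ hT₂ ⟨hR, hP, hS, hvr, hup, hrs⟩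
      ⟨⟨ur, hR₁ur, hR₂ur, hQ₁ur⟩, ⟨l, hP₁l, hP₂l, hQ₁l⟩, ⟨vq, hS₁vq, hS₂vq, hQvq⟩,
        hQvr₁, hQup₁, hQrs₁, hQvr₂, hQup₂, hQrs₂⟩
  have hax : ax = n := line_unique hUV (point_unique hup hYup₁ hYup₂ hUup₁ hUup₂ ▸ hYax)
    (point_unique hvr hXvr₁ hXvr₂ hVvr₁ hVvr₂ ▸ hXax) hUn hVn
  subst hax
  exact (point_unique (ne_of_mem_of_not_mem' hR₁rs₁ hR₁n) hZrs₁ hZax hD₁rs₁ hD₁n).symm.trans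
    (point_unique (ne_of_mem_of_not_mem' hR₂rs₂ hR₂n) hZrs₂ hZax hD₂rs₂ hD₂n)

/-- Any two auxiliary points are linked by `R₁ ~ A₁ ~ A₂ ~ R₂` with `A₁ ∈ UR₁` and
`A₂ = VA₁·UR₂`, each step moving along a line through `U` or `V`. -/
theorem QuadrangleOutput.eq (hdes : DesarguesProperty P L) (h4 : LinesHaveAtLeast P L 4)
    (hUV : U ≠ V) (hUn : U ∈ n) (hVn : V ∈ n) (hUl : U ∉ l) (hVl : V ∉ l) {R₁ R₂ D₁ D₂ : P}
    (h₁ : QuadrangleOutput n l U V R₁ D₁) (h₂ : QuadrangleOutput n l U V R₂ D₂) : D₁ = D₂ := by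
  classical
  obtain ⟨u₁, hUu₁, hR₁u₁⟩ := exists_line (L := L) (ne_of_mem_of_not_mem hUn h₁.1)
  obtain ⟨u₂, hUu₂, hR₂u₂⟩ := exists_line (L := L) (ne_of_mem_of_not_mem hUn h₂.1)
  obtain ⟨Q₁, hQ₁u₁, hQ₁l⟩ := exists_point (P := P) (ne_of_mem_of_not_mem' hR₁u₁ h₁.2.1)
  obtain ⟨Q₂, hQ₂u₂, hQ₂l⟩ := exists_point (P := P) (ne_of_mem_of_not_mem' hR₂u₂ h₂.2.1)
  have hu₂n : u₂ ≠ n := ne_of_mem_of_not_mem' hR₂u₂ h₂.1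
  have hU_of_mem : ∀ {v : L}, V ∈ v → U ∈ v → v = n := fun hVv hUv =>
    line_unique hUV hUv hVv hUn hVn
  obtain ⟨v, hVv, hQ₂v⟩ := exists_line (L := L) (ne_of_mem_of_not_mem hQ₂l hVl).symm
  have hvu₁ : v ≠ u₁ := fun h =>
    hUl (point_unique hu₂n hQ₂u₂ (hU_of_mem hVv (h ▸ hUu₁) ▸ hQ₂v) hUu₂ hUn ▸ hQ₂l)
  obtain ⟨X, hXv, hXu₁⟩ := exists_point (P := P) hvu₁
  obtain ⟨A₁, hA₁u₁, hA₁⟩ := h4.exists_mem_notMem u₁ {U, Q₁, X}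
    (Finset.card_le_three.trans_lt (by norm_num))
  simp only [Finset.mem_insert, Finset.mem_singleton, not_or] at hA₁
  obtain ⟨hA₁U, hA₁Q₁, hA₁X⟩ := hA₁
  have hu₁n : u₁ ≠ n := ne_of_mem_of_not_mem' hR₁u₁ h₁.1
  have hA₁n : A₁ ∉ n := fun h => hA₁U (point_unique hu₁n hA₁u₁ h hUu₁ hUn)
  have hA₁l : A₁ ∉ l := fun h =>
    hA₁Q₁ (point_unique (ne_of_mem_of_not_mem' hR₁u₁ h₁.2.1) hA₁u₁ h hQ₁u₁ hQ₁l)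
  obtain ⟨v₁, hVv₁, hA₁v₁⟩ := exists_line (L := L) (ne_of_mem_of_not_mem hVn hA₁n)
  have hUv₁ : U ∉ v₁ := fun h => hA₁n (hU_of_mem hVv₁ h ▸ hA₁v₁)
  obtain ⟨A₂, hA₂v₁, hA₂u₂⟩ := exists_point (P := P) (ne_of_mem_of_not_mem' hUu₂ hUv₁).symm
  have hA₂n : A₂ ∉ n := fun h => hUv₁ (point_unique hu₂n hA₂u₂ h hUu₂ hUn ▸ hA₂v₁)
  have hA₂l : A₂ ∉ l := by
    intro h
    obtain rfl : A₂ = Q₂ := point_unique (ne_of_mem_of_not_mem' hR₂u₂ h₂.2.1) hA₂u₂ h hQ₂u₂ hQ₂l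
    have hv₁v : v₁ = v := line_unique (ne_of_mem_of_not_mem hQ₂l hVl).symm hVv₁ hA₂v₁ hVv hQ₂v
    exact hA₁X (point_unique hvu₁ (hv₁v ▸ hA₁v₁) hA₁u₁ hXv hXu₁)
  obtain ⟨E₁, hE₁⟩ := exists_quadrangleOutput hUV hUn hVn hUl hVl hA₁n hA₁l
  obtain ⟨E₂, hE₂⟩ := exists_quadrangleOutput hUV hUn hVn hUl hVl hA₂n hA₂l
  calc D₁ = E₁ := h₁.eq_of_col hdes hUV hUn hVn hUl hVl hE₁ ⟨u₁, hUu₁, hR₁u₁, hA₁u₁⟩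
    _ = E₂ := hE₁.symm.eq_of_col hdes hUV.symm hVn hUn hVl hUl hE₂.symm ⟨v₁, hVv₁, hA₁v₁, hA₂v₁⟩
    _ = D₂ := hE₂.eq_of_col hdes hUV hUn hVn hUl hVl h₂ ⟨u₂, hUu₂, hA₂u₂, hR₂u₂⟩

/-- For `R ∈ UO` the quadrangle construction over a line `l` through `O` has `Q = UR·l = O`, so
its remaining steps `l ↦ U(l·VR) ↦ R(U(l·VR)·VO)` are pencil perspectivities. -/
theorem quadrangleOutput_pencilPersp {n l vr t : L} {O R : P} (hVvr : V ∈ vr) (hRvr : R ∈ vr)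
    (hOvr : O ∉ vr) (hUvr : U ∉ vr) (hVt : V ∈ t) (hOt : O ∈ t) (hUt : U ∉ t) (hRt : R ∉ t)
    (hRn : R ∉ n) (hRl : R ∉ l) (hOl : O ∈ l) (hURO : Col P L U R O) :
    ∃ D, D ∈ (pencilPersp hUt hRt (pencilPersp hOvr hUvr ⟨l, hOl⟩) : L) ∧
      QuadrangleOutput n l U V R D := by
  obtain ⟨Pp, hPl, hPvr, hPk⟩ := exists_mem_pencilPersp hOvr hUvr ⟨l, hOl⟩
  obtain ⟨S, hSk, hSt, hSk'⟩ := exists_mem_pencilPersp hUt hRt (pencilPersp hOvr hUvr ⟨l, hOl⟩)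
  set k' := pencilPersp hUt hRt (pencilPersp hOvr hUvr ⟨l, hOl⟩)
  obtain ⟨D, hDk', hDn⟩ := exists_point (P := P) (ne_of_mem_of_not_mem' k'.2 hRn)
  exact ⟨D, hDk', hRn, hRl, hDn, Pp, O, S, hPl, ⟨vr, hVvr, hRvr, hPvr⟩, hOl, hURO,
    ⟨_, (pencilPersp hOvr hUvr ⟨l, hOl⟩).2, hPk, hSk⟩, ⟨t, hVt, hOt, hSt⟩, ⟨k', k'.2, hSk', hDk'⟩⟩

end Harmonic

section Conic

variable {P L}

structure Presents (κ : Set P) (U V : P) (π : {k : L // U ∈ k} → {k : L // V ∈ k}) : Prop where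
  ne : U ≠ V
  isProj : IsProj P L (.pencil U) (.pencil V) π
  map_ne : ∀ k, (π k : L) ≠ k
  eq_conicSet : κ = conicSet P L U V π

variable {κ : Set P} {U V : P} {π : {k : L // U ∈ k} → {k : L // V ∈ k}}

namespace Presents

theorem mem (hp : Presents κ U V π) (k : {k : L // U ∈ k}) {X : P} (hXk : X ∈ (k : L))
    (hXπ : X ∈ (π k : L)) : X ∈ κ :=
  hp.eq_conicSet ▸ ⟨k, hXk, hXπ⟩

variable [ProjectivePlane P L]

theorem mem_map (hp : Presents κ U V π) {X : P} (hX : X ∈ κ) {k : {k : L // U ∈ k}}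
    (hXk : X ∈ (k : L)) (hXU : X ≠ U) : X ∈ (π k : L) := by
  rw [hp.eq_conicSet] at hX
  obtain ⟨k', hXk', hXπ⟩ := hX
  rwa [Subtype.ext (line_unique hXU hXk' k'.2 hXk k.2)] at hXπ

theorem symm (hp : Presents κ U V π) :
    ∃ π' : {k : L // V ∈ k} → {k : L // U ∈ k}, Presents κ V U π' := by
  obtain ⟨π', hπ', hl, hr⟩ := hp.isProj.exists_inverse
  refine ⟨π', hp.ne.symm, hπ',
    fun k h => hp.map_ne (π' k) ((congrArg Subtype.val (hr k)).trans h.symm), ?_⟩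
  rw [hp.eq_conicSet]
  ext X
  constructor
  · rintro ⟨k, hXk, hXπ⟩
    exact ⟨π k, hXπ, by rwa [hl k]⟩
  · rintro ⟨k, hXk, hXπ⟩
    exact ⟨π' k, hXπ, by rwa [hr k]⟩

theorem isTangent_iff_mem_map (hp : Presents κ U V π) (k : {k : L // U ∈ k}) :
    IsTangent P L κ k U ↔ U ∈ (π k : L) := by
  obtain ⟨X, hXπ, hXk⟩ := exists_point (P := P) (hp.map_ne k)
  refine ⟨fun ht => ht.2.2 X (hp.mem k hXk hXπ) hXk ▸ hXπ, fun hU => ⟨hp.mem k k.2 hU, k.2, ?_⟩⟩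
  intro Y hY hYk
  by_contra hYU
  exact hp.map_ne k (line_unique hYU (hp.mem_map hY hYk hYU) hU hYk k.2)

theorem isTangent_map_iff (hp : Presents κ U V π) (k : {k : L // U ∈ k}) :
    IsTangent P L κ (π k) V ↔ V ∈ (k : L) := by
  obtain ⟨X, hXπ, hXk⟩ := exists_point (P := P) (hp.map_ne k)
  refine ⟨fun ht => ht.2.2 X (hp.mem k hXk hXπ) hXπ ▸ hXk, fun hV => ⟨hp.mem k hV (π k).2,
    (π k).2, ?_⟩⟩
  intro Y hY hYπ
  by_contra hYV
  rw [hp.eq_conicSet] at hY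
  obtain ⟨k', hYk', hYπ'⟩ := hY
  obtain rfl : k' = k := hp.isProj.injective <| Subtype.ext <|
    line_unique (Ne.symm hYV) (π k').2 hYπ' (π k).2 hYπ
  exact hYV (point_unique (hp.map_ne k').symm hYk' hYπ hV (π k').2)

theorem exists_isTangent_left (hp : Presents κ U V π) : ∃ t : L, IsTangent P L κ t U := by
  obtain ⟨uv, hUuv, hVuv⟩ := exists_line (L := L) hp.ne
  obtain ⟨k, hk⟩ := hp.isProj.surjective ⟨uv, hVuv⟩
  exact ⟨k, (hp.isTangent_iff_mem_map k).2 (by rw [hk]; exact hUuv)⟩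

theorem exists_isTangent_right (hp : Presents κ U V π) : ∃ t : L, IsTangent P L κ t V := by
  obtain ⟨uv, hUuv, hVuv⟩ := exists_line (L := L) hp.ne
  exact ⟨_, (hp.isTangent_map_iff ⟨uv, hUuv⟩).2 hVuv⟩

theorem eq_of_mem_of_left_mem (hp : Presents κ U V π) {ℓ : L} (hUℓ : U ∈ ℓ) {X Y : P}
    (hX : X ∈ κ) (hY : Y ∈ κ) (hXℓ : X ∈ ℓ) (hYℓ : Y ∈ ℓ) (hXU : X ≠ U) (hYU : Y ≠ U) :
    X = Y :=
  point_unique (hp.map_ne ⟨ℓ, hUℓ⟩).symm hXℓ (hp.mem_map hX hXℓ hXU) hYℓ (hp.mem_map hY hYℓ hYU)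

theorem eq_of_mem_of_right_mem (hp : Presents κ U V π) {ℓ : L} (hVℓ : V ∈ ℓ) {X Y : P}
    (hX : X ∈ κ) (hY : Y ∈ κ) (hXℓ : X ∈ ℓ) (hYℓ : Y ∈ ℓ) (hXV : X ≠ V) (hYV : Y ≠ V) :
    X = Y := by
  rw [hp.eq_conicSet] at hX hY
  obtain ⟨k, hXk, hXπ⟩ := hX
  obtain ⟨k', hYk', hYπ⟩ := hY
  have hπk : (π k : L) = ℓ := line_unique (Ne.symm hXV) (π k).2 hXπ hVℓ hXℓ
  obtain rfl : k' = k := hp.isProj.injective <| Subtype.ext <|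
    (line_unique (Ne.symm hYV) (π k').2 hYπ hVℓ hYℓ).trans hπk.symm
  exact point_unique (hπk ▸ (hp.map_ne k').symm) hXk hXℓ hYk' hYℓ

/-- The projectivity `ℓ → U* → V* → ℓ` fixes the points of `κ` on `ℓ`, so by Axiom T it also
fixes `UV·ℓ`, which then lies on `π(UV)·UV = V`. -/
theorem not_col_of_notMem (hT : AxiomT P L) (hp : Presents κ U V π) {ℓ : L} (hUℓ : U ∉ ℓ)
    (hVℓ : V ∉ ℓ) {X Y Z : P} (hX : X ∈ κ) (hY : Y ∈ κ) (hZ : Z ∈ κ) (hXY : X ≠ Y) (hXZ : X ≠ Z)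
    (hYZ : Y ≠ Z) (hXℓ : X ∈ ℓ) (hYℓ : Y ∈ ℓ) (hZℓ : Z ∈ ℓ) : False := by
  have hfix : ∀ W : {W : P // W ∈ ℓ}, (W : P) ∈ κ →
      (pencilMeet hVℓ ∘ π ∘ rangeJoin hUℓ) W = W := fun W hW =>
    pencilMeet_eq hVℓ (hp.mem_map hW (mem_rangeJoin hUℓ W) (ne_of_mem_of_not_mem W.2 hUℓ)) W.2
  have hid := hT (.range ℓ) _
    ((isProj_rangeJoin hUℓ).comp hp.isProj |>.comp (isProj_pencilMeet hVℓ))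
    ⟨⟨X, hXℓ⟩, ⟨Y, hYℓ⟩, ⟨Z, hZℓ⟩, fun h => hXY (congrArg Subtype.val h),
      fun h => hXZ (congrArg Subtype.val h), fun h => hYZ (congrArg Subtype.val h),
      hfix _ hX, hfix _ hY, hfix _ hZ⟩
  obtain ⟨uv, hUuv, hVuv⟩ := exists_line (L := L) hp.ne
  obtain ⟨C, hCuv, hCℓ⟩ := exists_point (P := P) (ne_of_mem_of_not_mem' hUuv hUℓ)
  have hCπ : C ∈ (π ⟨uv, hUuv⟩ : L) := by
    have hC := mem_pencilMeet hVℓ (π (rangeJoin hUℓ ⟨C, hCℓ⟩))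
    rwa [show pencilMeet hVℓ (π (rangeJoin hUℓ ⟨C, hCℓ⟩)) = ⟨C, hCℓ⟩ from hid ⟨C, hCℓ⟩,
      rangeJoin_eq hUℓ hUuv hCuv] at hC
  exact hVℓ (point_unique (hp.map_ne _) hCπ hCuv (π _).2 hVuv ▸ hCℓ)

theorem not_col (hT : AxiomT P L) (hp : Presents κ U V π) {X Y Z : P} (hX : X ∈ κ)
    (hY : Y ∈ κ) (hZ : Z ∈ κ) (hXY : X ≠ Y) (hXZ : X ≠ Z) (hYZ : Y ≠ Z) : ¬ Col P L X Y Z := by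
  rintro ⟨ℓ, hXℓ, hYℓ, hZℓ⟩
  by_cases hUVℓ : U ∈ ℓ ∨ V ∈ ℓ
  · obtain ⟨A, key⟩ : ∃ A : P, ∀ {B C : P}, B ∈ κ → C ∈ κ → B ∈ ℓ → C ∈ ℓ → B ≠ A → C ≠ A →
        B = C :=
      hUVℓ.elim (fun hUℓ => ⟨U, hp.eq_of_mem_of_left_mem hUℓ⟩)
        (fun hVℓ => ⟨V, hp.eq_of_mem_of_right_mem hVℓ⟩)
    rcases eq_or_ne X A with rfl | hXA
    · exact hYZ (key hY hZ hYℓ hZℓ hXY.symm hXZ.symm)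
    rcases eq_or_ne Y A with rfl | hYA
    · exact hXZ (key hX hZ hXℓ hZℓ hXA hYZ.symm)
    · exact hXY (key hX hY hXℓ hYℓ hXA hYA)
  rw [not_or] at hUVℓ
  exact hp.not_col_of_notMem hT hUVℓ.1 hUVℓ.2 hX hY hZ hXY hXZ hYZ hXℓ hYℓ hZℓ

/-- The projectivity `Z ↦ π(UZ)·UB` from `VB` to `UB` fixes `B`, so it is a perspectivity; its
centre is the pole of `UV`, as `V ↦ tV·UB` and `tU·VB ↦ U`. -/
theorem exists_pole (hT : AxiomT P L) (h3 : LinesHaveAtLeast P L 3) (hp : Presents κ U V π)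
    {B : P} (hB : B ∈ κ) (hBU : B ≠ U) (hBV : B ≠ V) {ub vb tU tV : L} (hUub : U ∈ ub)
    (hBub : B ∈ ub) (hVvb : V ∈ vb) (hBvb : B ∈ vb) (htU : IsTangent P L κ tU U)
    (htV : IsTangent P L κ tV V) :
    ∃ O : P, O ∉ vb ∧ O ∈ tU ∧ O ∈ tV ∧ ∀ (m : {k : L // U ∈ k}) (Z W : P),
      Z ∈ (m : L) → Z ∈ vb → W ∈ (π m : L) → W ∈ ub → Col P L O Z W := by
  have hB_notMem : ∀ k : {k : L // U ∈ k}, B ∈ (k : L) → V ∉ (k : L) := fun k hBk hVk =>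
    hp.map_ne k (line_unique hBV (hp.mem_map hB hBk hBU) (π k).2 hBk hVk)
  have hUvb : U ∉ vb := fun h => hB_notMem ⟨vb, h⟩ hBvb hVvb
  have hVub : V ∉ ub := hB_notMem ⟨ub, hUub⟩ hBub
  have hfix : ((pencilMeet hVub ∘ π ∘ rangeJoin hUvb) ⟨B, hBvb⟩ : P) = B := by
    rw [Function.comp_apply, Function.comp_apply, rangeJoin_eq (X := ⟨B, hBvb⟩) hUvb hUub hBub,
      pencilMeet_eq hVub (hp.mem_map (k := ⟨ub, hUub⟩) hB hBub hBU) hBub]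
  obtain ⟨O, hOvb, -, hO⟩ :=
    IsProj.isRangePersp_of_fixed hT h3 (ne_of_mem_of_not_mem' hUub hUvb).symm
      ((isProj_rangeJoin hUvb).comp hp.isProj |>.comp (isProj_pencilMeet hVub)) hBvb hBub hfix
  have hcol : ∀ (m : {k : L // U ∈ k}) (Z W : P),
      Z ∈ (m : L) → Z ∈ vb → W ∈ (π m : L) → W ∈ ub → Col P L O Z W := by
    intro m Z W hZm hZvb hWπ hWub
    obtain ⟨k, hOk, hZk, hWk⟩ := hO ⟨Z, hZvb⟩
    rw [Function.comp_apply, Function.comp_apply, rangeJoin_eq (X := ⟨Z, hZvb⟩) hUvb m.2 hZm,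
      pencilMeet_eq hVub hWπ hWub] at hWk
    exact ⟨k, hOk, hZk, hWk⟩
  refine ⟨O, hOvb, ?_, ?_, hcol⟩
  · have hUπ := (hp.isTangent_iff_mem_map ⟨tU, htU.2.1⟩).1 htU
    obtain ⟨Z, hZtU, hZvb⟩ := exists_point (P := P) (ne_of_mem_of_not_mem' htU.2.1 hUvb)
    exact (hcol _ Z U hZtU hZvb hUπ hUub).mem_left (ne_of_mem_of_not_mem hZvb hUvb) hZtU htU.2.1
  · obtain ⟨k, hk⟩ := hp.isProj.surjective ⟨tV, htV.2.1⟩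
    obtain rfl : (π k : L) = tV := congrArg Subtype.val hk
    have hVk := (hp.isTangent_map_iff k).1 htV
    obtain ⟨W, hWπ, hWub⟩ := exists_point (P := P) (ne_of_mem_of_not_mem' (π k).2 hVub)
    exact (hcol k V W hVk hVvb hWπ hWub).mem_left (ne_of_mem_of_not_mem hWub hVub).symm
      (π k).2 hWπ

/-- `σ m ≠ m` is automatic: `σ` maps the tangent at `U` to `UB`, so it cannot also fix `UB`. -/
theorem of_forall_mem {B : P} {σ : {k : L // U ∈ k} → {k : L // B ∈ k}}
    (hp : Presents κ U V π) (hB : B ∈ κ) (hBU : B ≠ U)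
    (hσ : IsProj P L (.pencil U) (.pencil B) σ)
    (hmem : ∀ (k : {k : L // U ∈ k}) (X : P), X ∈ (k : L) → X ∈ (π k : L) → X ∈ (σ k : L)) :
    Presents κ U B σ := by
  have hne : ∀ k, (σ k : L) ≠ k := by
    intro k hk
    obtain ⟨t, ht⟩ := hp.exists_isTangent_left
    have hUσt := hmem ⟨t, ht.2.1⟩ U ht.2.1 ((hp.isTangent_iff_mem_map _).1 ht)
    have hσtk : σ ⟨t, ht.2.1⟩ = σ k := Subtype.ext <|
      line_unique hBU.symm hUσt (σ _).2 (hk ▸ k.2) (σ k).2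
    have htk : t = k := congrArg Subtype.val (hσ.injective hσtk)
    have hBk : B ∈ (k : L) := hk ▸ (σ k).2
    exact hBU (ht.2.2 B hB (htk ▸ hBk))
  refine ⟨hBU.symm, hσ, hne, ?_⟩
  rw [hp.eq_conicSet]
  ext X
  constructor
  · rintro ⟨k, hXk, hXπ⟩
    exact ⟨k, hXk, hmem k X hXk hXπ⟩
  · rintro ⟨k, hXk, hXσ⟩
    obtain ⟨Y, hYπ, hYk⟩ := exists_point (P := P) (hp.map_ne k)
    obtain rfl : X = Y := point_unique (hne k).symm hXk hXσ hYk (hmem k Y hYk hYπ)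
    exact ⟨k, hXk, hYπ⟩

end Presents

end Conic

section Steiner

variable {P L} {κ : Set P} {U V : P} {π : {k : L // U ∈ k} → {k : L // V ∈ k}}

structure SteinerConfig (κ : Set P) (π : {k : L // U ∈ k} → {k : L // V ∈ k}) (B O R : P)
    (uv ub vb vr tU tV : L) : Prop where
  presents : Presents κ U V π
  mem : B ∈ κ
  ne : B ≠ U
  U_mem_uv : U ∈ uv
  V_mem_uv : V ∈ uv
  U_mem_ub : U ∈ ub
  B_mem_ub : B ∈ ub
  V_mem_vb : V ∈ vb
  B_mem_vb : B ∈ vb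
  V_mem_vr : V ∈ vr
  R_mem_vr : R ∈ vr
  isTangent_tU : IsTangent P L κ tU U
  V_mem_tV : V ∈ tV
  O_mem_tU : O ∈ tU
  O_mem_tV : O ∈ tV
  R_mem_tU : R ∈ tU
  R_ne_O : R ≠ O
  U_notMem_vb : U ∉ vb
  V_notMem_ub : V ∉ ub
  B_notMem_uv : B ∉ uv
  O_notMem_vb : O ∉ vb
  O_notMem_vr : O ∉ vr
  U_notMem_vr : U ∉ vr
  U_notMem_tV : U ∉ tV
  R_notMem_tV : R ∉ tV
  R_notMem_uv : R ∉ uv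
  col : ∀ (m : {k : L // U ∈ k}) (Z W : P),
    Z ∈ (m : L) → Z ∈ vb → W ∈ (π m : L) → W ∈ ub → Col P L O Z W

theorem SteinerConfig.U_mem_tU {B O R : P} {uv ub vb vr tU tV : L}
    (c : SteinerConfig κ π B O R uv ub vb vr tU tV) : U ∈ tU :=
  c.isTangent_tU.2.1

variable [ProjectivePlane P L]

theorem Presents.exists_steinerConfig (hT : AxiomT P L) (h3 : LinesHaveAtLeast P L 3)
    (hp : Presents κ U V π) {B : P} (hB : B ∈ κ) (hBU : B ≠ U) (hBV : B ≠ V) :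
    ∃ (O R : P) (uv ub vb vr tU tV : L), SteinerConfig κ π B O R uv ub vb vr tU tV := by
  classical
  obtain ⟨tU, htU⟩ := hp.exists_isTangent_left
  obtain ⟨tV, htV⟩ := hp.exists_isTangent_right
  obtain ⟨uv, hUuv, hVuv⟩ := exists_line (L := L) hp.ne
  obtain ⟨ub, hUub, hBub⟩ := exists_line (L := L) hBU.symm
  obtain ⟨vb, hVvb, hBvb⟩ := exists_line (L := L) hBV.symm
  obtain ⟨O, hOvb, hOtU, hOtV, hcol⟩ :=
    hp.exists_pole hT h3 hB hBU hBV hUub hBub hVvb hBvb htU htV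
  have hUVB : ¬ Col P L U V B := hp.not_col hT htU.1 htV.1 hB hp.ne hBU.symm hBV.symm
  have hVtU : V ∉ tU := fun h => hp.ne (htU.2.2 V htV.1 h).symm
  have hUtV : U ∉ tV := fun h => hp.ne (htV.2.2 U htU.1 h)
  obtain ⟨R, hRtU, hR⟩ := h3.exists_mem_notMem tU {O, U}
    (Finset.card_le_two.trans_lt (by norm_num))
  simp only [Finset.mem_insert, Finset.mem_singleton, not_or] at hR
  obtain ⟨hRO, hRU⟩ := hR
  have hRuv : R ∉ uv := fun h =>
    hRU (point_unique (ne_of_mem_of_not_mem' hVuv hVtU).symm hRtU h htU.2.1 hUuv)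
  have hRtV : R ∉ tV := fun h =>
    hRO (point_unique (ne_of_mem_of_not_mem' htU.2.1 hUtV) hRtU h hOtU hOtV)
  obtain ⟨vr, hVvr, hRvr⟩ := exists_line (L := L) (ne_of_mem_of_not_mem hVuv hRuv)
  refine ⟨O, R, uv, ub, vb, vr, tU, tV, hp, hB, hBU, hUuv, hVuv, hUub, hBub, hVvb, hBvb, hVvr,
    hRvr, htU, htV.2.1, hOtU, hOtV, hRtU, hRO, fun h => hUVB ⟨vb, h, hVvb, hBvb⟩,
    fun h => hUVB ⟨ub, hUub, h, hBub⟩, fun h => hUVB ⟨uv, hUuv, hVuv, h⟩, hOvb,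
    fun h => hRtV ?_, fun h => hRuv ?_, hUtV, hRtV, hRuv, hcol⟩
  · exact line_unique (ne_of_mem_of_not_mem hOtU hVtU) h hVvr hOtV htV.2.1 ▸ hRvr
  · exact line_unique hp.ne h hVvr hUuv hVuv ▸ hRvr

namespace SteinerConfig

variable {B O R : P} {uv ub vb vr tU tV : L}

def chain (c : SteinerConfig κ π B O R uv ub vb vr tU tV) :
    {k : L // U ∈ k} → {k : L // B ∈ k} :=
  pencilPersp c.R_notMem_uv c.B_notMem_uv ∘ pencilPersp c.U_notMem_tV c.R_notMem_tV ∘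
    pencilPersp c.O_notMem_vr c.U_notMem_vr ∘ pencilPersp c.U_notMem_vb c.O_notMem_vb

variable (c : SteinerConfig κ π B O R uv ub vb vr tU tV)

theorem isProj_chain : IsProj P L (.pencil U) (.pencil B) c.chain :=
  (((isProj_pencilPersp _ _).comp (isProj_pencilPersp _ _)).comp (isProj_pencilPersp _ _)).comp
    (isProj_pencilPersp _ _)

theorem chain_tU : c.chain ⟨tU, c.U_mem_tU⟩ = ⟨ub, c.B_mem_ub⟩ := by
  rw [chain, Function.comp_apply, Function.comp_apply, Function.comp_apply,
    pencilPersp_eq_self c.U_notMem_vb c.O_notMem_vb c.O_mem_tU,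
    pencilPersp_eq_self c.O_notMem_vr c.U_notMem_vr c.U_mem_tU,
    pencilPersp_eq_self c.U_notMem_tV c.R_notMem_tV c.R_mem_tU]
  exact pencilPersp_eq _ _ c.U_mem_tU c.U_mem_uv c.B_mem_ub c.U_mem_ub

theorem chain_uv : c.chain ⟨uv, c.U_mem_uv⟩ = ⟨vb, c.B_mem_vb⟩ := by
  have hVtV := c.V_mem_tV
  rw [chain, Function.comp_apply, Function.comp_apply, Function.comp_apply,
    pencilPersp_eq c.U_notMem_vb c.O_notMem_vb c.V_mem_uv c.V_mem_vb c.O_mem_tV hVtV,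
    pencilPersp_eq c.O_notMem_vr c.U_notMem_vr hVtV c.V_mem_vr c.U_mem_uv c.V_mem_uv,
    pencilPersp_eq c.U_notMem_tV c.R_notMem_tV c.V_mem_uv hVtV c.R_mem_vr c.V_mem_vr]
  exact pencilPersp_eq _ _ c.V_mem_vr c.V_mem_uv c.B_mem_vb c.V_mem_vb

/-- With `l = O(m·vb)`, both `B` (with `Pp = m·vb`, `Q = π(m)·ub`, `S = m·π(m)`) and `R` (with
`Q = O`) are auxiliary points of the quadrangle construction over `l`, and the second one is
what `chain` computes. -/
theorem mem_chain_of_notMem (hdes : DesarguesProperty P L) (h4 : LinesHaveAtLeast P L 4)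
    {m : {k : L // U ∈ k}} (hBm : B ∉ (m : L)) (hVm : V ∉ (m : L)) (hUπ : U ∉ (π m : L))
    {X : P} (hXm : X ∈ (m : L)) (hXπ : X ∈ (π m : L)) : X ∈ (c.chain m : L) := by
  obtain ⟨Z, hZm, hZvb, hZl⟩ := exists_mem_pencilPersp c.U_notMem_vb c.O_notMem_vb m
  set l := pencilPersp c.U_notMem_vb c.O_notMem_vb m
  obtain ⟨W, hWπ, hWub⟩ := exists_point (P := P) (ne_of_mem_of_not_mem' (π m).2 c.V_notMem_ub)
  have hWl : W ∈ (l : L) := (c.col m Z W hZm hZvb hWπ hWub).mem_right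
    (ne_of_mem_of_not_mem hZvb c.O_notMem_vb).symm l.2 hZl
  have hZU : Z ≠ U := ne_of_mem_of_not_mem hZvb c.U_notMem_vb
  have hUl : U ∉ (l : L) := fun h =>
    hUπ (point_unique (ne_of_mem_of_not_mem' c.B_mem_ub hBm).symm
      (line_unique hZU.symm h hZl m.2 hZm ▸ hWl) hWub m.2 c.U_mem_ub ▸ hWπ)
  have hVl : V ∉ (l : L) := fun h =>
    c.O_notMem_vb (line_unique (ne_of_mem_of_not_mem hZm hVm) hZl h hZvb c.V_mem_vb ▸ l.2)
  have hBl : B ∉ (l : L) := fun h =>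
    c.O_notMem_vb (line_unique (ne_of_mem_of_not_mem hZm hBm) hZl h hZvb c.B_mem_vb ▸ l.2)
  have hRl : R ∉ (l : L) := by
    intro h
    have hltU : (l : L) = tU := line_unique c.R_ne_O.symm l.2 h c.O_mem_tU c.R_mem_tU
    have hZtU : Z ∈ tU := hltU ▸ hZl
    have hmtU : m = ⟨tU, c.U_mem_tU⟩ :=
      Subtype.ext (line_unique hZU.symm m.2 hZm c.U_mem_tU hZtU)
    rw [hmtU] at hUπ
    exact hUπ ((c.presents.isTangent_iff_mem_map _).1 c.isTangent_tU)
  obtain ⟨bx, hBbx, hXbx⟩ := exists_line (L := L) (ne_of_mem_of_not_mem hXm hBm).symm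
  obtain ⟨D, hDbx, hDuv⟩ := exists_point (P := P) (ne_of_mem_of_not_mem' hBbx c.B_notMem_uv)
  have hD : QuadrangleOutput uv l U V B D := ⟨c.B_notMem_uv, hBl, hDuv, Z, W, X, hZl,
    ⟨vb, c.V_mem_vb, c.B_mem_vb, hZvb⟩, hWl, ⟨ub, c.U_mem_ub, c.B_mem_ub, hWub⟩,
    ⟨m, m.2, hZm, hXm⟩, ⟨π m, (π m).2, hWπ, hXπ⟩, ⟨bx, hBbx, hXbx, hDbx⟩⟩
  obtain ⟨D', hD'k, hD'⟩ := quadrangleOutput_pencilPersp c.V_mem_vr c.R_mem_vr c.O_notMem_vr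
    c.U_notMem_vr c.V_mem_tV c.O_mem_tV c.U_notMem_tV c.R_notMem_tV c.R_notMem_uv hRl
    l.2 ⟨tU, c.U_mem_tU, c.R_mem_tU, c.O_mem_tU⟩
  obtain rfl : D' = D := hD'.eq hdes h4 c.presents.ne c.U_mem_uv c.V_mem_uv hUl hVl hD
  have hm : c.chain m = ⟨bx, hBbx⟩ := pencilPersp_eq c.R_notMem_uv c.B_notMem_uv hD'k hDuv hBbx hDbx
  exact hm ▸ hXbx

theorem mem_chain (hdes : DesarguesProperty P L) (h4 : LinesHaveAtLeast P L 4)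
    (m : {k : L // U ∈ k}) (X : P) (hXm : X ∈ (m : L)) (hXπ : X ∈ (π m : L)) :
    X ∈ (c.chain m : L) := by
  have hp := c.presents
  by_cases hBm : B ∈ (m : L)
  · obtain rfl : X = B := point_unique (hp.map_ne m).symm hXm hXπ hBm (hp.mem_map c.mem hBm c.ne)
    exact (c.chain m).2
  by_cases hVm : V ∈ (m : L)
  · obtain rfl : m = ⟨uv, c.U_mem_uv⟩ :=
      Subtype.ext (line_unique hp.ne m.2 hVm c.U_mem_uv c.V_mem_uv)
    obtain rfl : X = V := point_unique (hp.map_ne _).symm hXm hXπ hVm (π _).2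
    rw [c.chain_uv]
    exact c.V_mem_vb
  by_cases hUπ : U ∈ (π m : L)
  · have hUtU := c.U_mem_tU
    obtain rfl : m = ⟨tU, hUtU⟩ := hp.isProj.injective <| Subtype.ext <|
      line_unique hp.ne hUπ (π m).2 ((hp.isTangent_iff_mem_map _).1 c.isTangent_tU) (π _).2
    obtain rfl : X = U := point_unique (hp.map_ne _).symm hXm hXπ hUtU hUπ
    rw [c.chain_tU]
    exact c.U_mem_ub
  exact c.mem_chain_of_notMem hdes h4 hBm hVm hUπ hXm hXπ

end SteinerConfig

theorem Presents.replace (hdes : DesarguesProperty P L) (hT : AxiomT P L)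
    (h4 : LinesHaveAtLeast P L 4) (hp : Presents κ U V π) {B : P} (hB : B ∈ κ) (hBU : B ≠ U) :
    ∃ σ : {k : L // U ∈ k} → {k : L // B ∈ k}, Presents κ U B σ := by
  by_cases hBV : B = V
  · subst hBV
    exact ⟨π, hp⟩
  obtain ⟨O, R, uv, ub, vb, vr, tU, tV, c⟩ :=
    hp.exists_steinerConfig hT (h4.mono (by norm_num)) hB hBU hBV
  exact ⟨c.chain, hp.of_forall_mem hB hBU c.isProj_chain (c.mem_chain hdes h4)⟩
theorem Presents.exists_presents (hdes : DesarguesProperty P L) (hT : AxiomT P L)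
    (h4 : LinesHaveAtLeast P L 4) (hp : Presents κ U V π) {A B : P} (hA : A ∈ κ) (hB : B ∈ κ)
    (hAB : A ≠ B) :
    ∃ σ : {k : L // A ∈ k} → {k : L // B ∈ k}, Presents κ A B σ := by
  by_cases hBU : B = U
  · subst hBU
    obtain ⟨_, hUA⟩ := hp.replace hdes hT h4 hA hAB
    exact hUA.symm
  · obtain ⟨_, hUB⟩ := hp.replace hdes hT h4 hB hBU
    obtain ⟨_, hBU'⟩ := hUB.symm
    obtain ⟨_, hBA⟩ := hBU'.replace hdes hT h4 hA hAB
    exact hBA.symm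

end Steiner

section Polar

variable {P L} [ProjectivePlane P L]

theorem exists_isHarmonic_of_quadrangle {E₁ E₂ E₃ E₄ C D₁ D₂ : P} {e₁₂ e₃₄ p : L}
    (h₁₂ : E₁ ≠ E₂) (h₁₂₃ : ¬ Col P L E₁ E₂ E₃) (h₁₂₄ : ¬ Col P L E₁ E₂ E₄)
    (h₁₃₄ : ¬ Col P L E₁ E₃ E₄) (h₂₃₄ : ¬ Col P L E₂ E₃ E₄) (hE₁ : E₁ ∈ e₁₂) (hE₂ : E₂ ∈ e₁₂)
    (hE₃ : E₃ ∈ e₃₄) (hE₄ : E₄ ∈ e₃₄) (hC₁₂ : C ∈ e₁₂) (hC₃₄ : C ∈ e₃₄)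
    (hD₁₃ : Col P L E₁ E₃ D₁) (hD₁₂₄ : Col P L E₂ E₄ D₁) (hD₂₁₄ : Col P L E₁ E₄ D₂)
    (hD₂₃ : Col P L E₂ E₃ D₂) (hD₁p : D₁ ∈ p) (hD₂p : D₂ ∈ p) :
    ∃ H : P, H ∈ e₁₂ ∧ H ∈ p ∧ IsHarmonic P L E₁ E₂ C H := by
  have hE₃e₁₂ : E₃ ∉ e₁₂ := fun h => h₁₂₃ ⟨e₁₂, hE₁, hE₂, h⟩
  have hD₁e₁₂ : D₁ ∉ e₁₂ := by
    intro h
    by_cases hD₁E₁ : D₁ = E₁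
    · subst hD₁E₁
      obtain ⟨w, hE₂w, hE₄w, hD₁w⟩ := hD₁₂₄
      exact h₁₂₄ ⟨w, hD₁w, hE₂w, hE₄w⟩
    · exact hE₃e₁₂ (hD₁₃.mem_mid (Ne.symm hD₁E₁) hE₁ h)
  have hD₁e₃₄ : D₁ ∉ e₃₄ := by
    intro h
    by_cases hD₁E₄ : D₁ = E₄
    · subst hD₁E₄
      exact h₁₃₄ hD₁₃
    · exact h₂₃₄ ⟨e₃₄, hD₁₂₄.mem_left (Ne.symm hD₁E₄) hE₄ h, hE₃, hE₄⟩
  obtain ⟨H, hHe₁₂, hHp⟩ := exists_point (P := P) (ne_of_mem_of_not_mem' hD₁p hD₁e₁₂).symm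
  refine ⟨H, hHe₁₂, hHp, h₁₂, e₁₂, e₃₄, D₁, E₄, E₃, D₂, hE₁, hE₂, hC₁₂, hC₃₄,
    ne_of_mem_of_not_mem' hE₃ hE₃e₁₂, hD₁e₁₂, hD₁e₃₄, hE₄, ?_, hE₃, ?_, hD₂₁₄, hD₂₃, hHe₁₂,
    ⟨p, hD₁p, hD₂p, hHp⟩⟩
  · obtain ⟨w, hE₂w, hE₄w, hD₁w⟩ := hD₁₂₄
    exact ⟨w, hE₂w, hD₁w, hE₄w⟩
  · obtain ⟨w, hE₁w, hE₃w, hD₁w⟩ := hD₁₃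
    exact ⟨w, hE₁w, hD₁w, hE₃w⟩

theorem FanoAxiom.diagonal_ne (hfano : FanoAxiom P L) {E₁ E₂ E₃ E₄ C D₁ D₂ : P} {e₁₂ e₃₄ : L}
    (h₁₂₃ : ¬ Col P L E₁ E₂ E₃) (h₁₂₄ : ¬ Col P L E₁ E₂ E₄) (h₁₃₄ : ¬ Col P L E₁ E₃ E₄)
    (h₂₃₄ : ¬ Col P L E₂ E₃ E₄) (hE₁ : E₁ ∈ e₁₂) (hE₂ : E₂ ∈ e₁₂) (hE₃ : E₃ ∈ e₃₄)
    (hE₄ : E₄ ∈ e₃₄) (hC₁₂ : C ∈ e₁₂) (hC₃₄ : C ∈ e₃₄) (hD₁₃ : Col P L E₁ E₃ D₁)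
    (hD₁₂₄ : Col P L E₂ E₄ D₁) (hD₂₁₄ : Col P L E₁ E₄ D₂) (hD₂₃ : Col P L E₂ E₃ D₂) :
    D₁ ≠ D₂ := by
  rintro rfl
  refine hfano E₁ E₂ E₃ E₄ C D₁ D₁ h₁₂₃ h₁₂₄ h₁₃₄ h₂₃₄ ⟨e₁₂, hE₁, hE₂, hC₁₂⟩
    ⟨e₃₄, hE₃, hE₄, hC₃₄⟩ hD₁₃ hD₁₂₄ hD₂₁₄ hD₂₃ ?_
  by_cases hCD : C = D₁
  · exact ⟨e₁₂, hC₁₂, hCD ▸ hC₁₂, hCD ▸ hC₁₂⟩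
  · obtain ⟨l, hCl, hDl⟩ := exists_line (L := L) hCD
    exact ⟨l, hCl, hDl, hDl⟩

theorem IsTangent.eq_of_mem_of_mem_secant {κ : Set P} {t s : L} {E F X : P}
    (ht : IsTangent P L κ t E) (hF : F ∈ κ) (hEF : E ≠ F) (hEs : E ∈ s) (hFs : F ∈ s)
    (hXt : X ∈ t) (hXs : X ∈ s) : X = E :=
  point_unique (fun h : t = s => hEF (ht.2.2 F hF (h ▸ hFs)).symm) hXt hXs ht.2.1 hEs

/-- The pole of `E₁E₂` is the centre given by `exists_pole` for a presentation from `E₁, E₂` and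
`B = E₃`; at `m = E₁E₄`, where `σ(E₁E₄) = E₂E₄`, its collinearity says that `Q, D₂, D₁` are
collinear. -/
theorem Presents.exists_pole_mem (hdes : DesarguesProperty P L) (hT : AxiomT P L)
    (h4 : LinesHaveAtLeast P L 4) {κ : Set P} {U V : P}
    {π : {k : L // U ∈ k} → {k : L // V ∈ k}} (hp : Presents κ U V π) {E₁ E₂ E₃ E₄ D₁ D₂ : P}
    (hE₁ : E₁ ∈ κ) (hE₂ : E₂ ∈ κ) (hE₃ : E₃ ∈ κ) (hE₄ : E₄ ∈ κ) (h₁₂ : E₁ ≠ E₂) (h₁₃ : E₁ ≠ E₃)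
    (h₁₄ : E₁ ≠ E₄) (h₂₃ : E₂ ≠ E₃) (h₂₄ : E₂ ≠ E₄) (hD₁₃ : Col P L E₁ E₃ D₁)
    (hD₁₂₄ : Col P L E₂ E₄ D₁) (hD₂₁₄ : Col P L E₁ E₄ D₂) (hD₂₃ : Col P L E₂ E₃ D₂)
    (hD₁₂ : D₁ ≠ D₂) {p : L} (hD₁p : D₁ ∈ p) (hD₂p : D₂ ∈ p) :
    ∃ (t₁ t₂ : L) (Q : P), IsTangent P L κ t₁ E₁ ∧ IsTangent P L κ t₂ E₂ ∧ Q ∈ t₁ ∧ Q ∈ t₂ ∧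
      Q ∈ p := by
  obtain ⟨σ, hσ⟩ := hp.exists_presents hdes hT h4 hE₁ hE₂ h₁₂
  obtain ⟨t₁, ht₁⟩ := hσ.exists_isTangent_left
  obtain ⟨t₂, ht₂⟩ := hσ.exists_isTangent_right
  obtain ⟨l₁₃, hE₁l₁₃, hE₃l₁₃, hD₁l₁₃⟩ := hD₁₃
  obtain ⟨l₂₃, hE₂l₂₃, hE₃l₂₃, hD₂l₂₃⟩ := hD₂₃
  obtain ⟨l₁₄, hE₁l₁₄, hE₄l₁₄, hD₂l₁₄⟩ := hD₂₁₄
  obtain ⟨l₂₄, hE₂l₂₄, hE₄l₂₄, hD₁l₂₄⟩ := hD₁₂₄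
  obtain ⟨Q, -, hQt₁, hQt₂, hQ⟩ := hσ.exists_pole hT (h4.mono (by norm_num)) hE₃ h₁₃.symm
    h₂₃.symm hE₁l₁₃ hE₃l₁₃ hE₂l₂₃ hE₃l₂₃ ht₁ ht₂
  have hσ₁₄ : (σ ⟨l₁₄, hE₁l₁₄⟩ : L) = l₂₄ :=
    line_unique h₂₄ (σ _).2 (hσ.mem_map hE₄ hE₄l₁₄ h₁₄.symm) hE₂l₂₄ hE₄l₂₄
  exact ⟨t₁, t₂, Q, ht₁, ht₂, hQt₁, hQt₂, (hQ ⟨l₁₄, hE₁l₁₄⟩ D₂ D₁ hD₂l₁₄ hD₂l₂₃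
    (hσ₁₄ ▸ hD₁l₂₄) hD₁l₁₃).mem_left hD₁₂.symm hD₂p hD₁p⟩

end Polar

theorem polar_quadrangle
    [Configuration.ProjectivePlane P L]
    (hdes : DesarguesProperty P L) (hfano : FanoAxiom P L)
    (h8 : LinesHaveAtLeast P L 8) (hT : AxiomT P L)
    (κ : Set P) (hκ : IsConic P L κ)
    (Pt : P)
    (E₁ E₂ E₃ E₄ : P)
    (hE₁κ : E₁ ∈ κ) (hE₂κ : E₂ ∈ κ) (hE₃κ : E₃ ∈ κ) (hE₄κ : E₄ ∈ κ)
    (h12 : E₁ ≠ E₂) (h13 : E₁ ≠ E₃) (h14 : E₁ ≠ E₄)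
    (h23 : E₂ ≠ E₃) (h24 : E₂ ≠ E₄) (h34 : E₃ ≠ E₄)
    (e12 e34 : L) (hE₁e : E₁ ∈ e12) (hE₂e : E₂ ∈ e12) (hE₃e : E₃ ∈ e34) (hE₄e : E₄ ∈ e34)
    (hP12 : Pt ∈ e12) (hP34 : Pt ∈ e34) :
    ∀ D₁ D₂ : P,
      Col P L E₁ E₃ D₁ → Col P L E₂ E₄ D₁ →
      Col P L E₁ E₄ D₂ → Col P L E₂ E₃ D₂ →
      D₁ ≠ D₂ ∧ ∀ p : L, D₁ ∈ p → D₂ ∈ p → IsPolar P L κ Pt p := by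
  intro D₁ D₂ hD₁₃ hD₁₂₄ hD₂₁₄ hD₂₃
  obtain ⟨U, V, π, hUV, hπ, hπne, rfl⟩ := hκ
  have hp : Presents (conicSet P L U V π) U V π := ⟨hUV, hπ, hπne, rfl⟩
  have h123 := hp.not_col hT hE₁κ hE₂κ hE₃κ h12 h13 h23
  have h124 := hp.not_col hT hE₁κ hE₂κ hE₄κ h12 h14 h24
  have h134 := hp.not_col hT hE₁κ hE₃κ hE₄κ h13 h14 h34
  have h234 := hp.not_col hT hE₂κ hE₃κ hE₄κ h23 h24 h34
  have hD₁₂ : D₁ ≠ D₂ := hfano.diagonal_ne h123 h124 h134 h234 hE₁e hE₂e hE₃e hE₄e hP12 hP34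
    hD₁₃ hD₁₂₄ hD₂₁₄ hD₂₃
  refine ⟨hD₁₂, fun p hD₁p hD₂p => ?_⟩
  obtain ⟨H, hHe, hHp, hH⟩ := exists_isHarmonic_of_quadrangle h12 h123 h124 h134 h234 hE₁e hE₂e
    hE₃e hE₄e hP12 hP34 hD₁₃ hD₁₂₄ hD₂₁₄ hD₂₃ hD₁p hD₂p
  obtain ⟨t₁, t₂, Q, ht₁, ht₂, hQt₁, hQt₂, hQp⟩ :=
    hp.exists_pole_mem hdes hT (h8.mono (by norm_num)) hE₁κ hE₂κ hE₃κ hE₄κ h12 h13 h14 h23 h24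
      hD₁₃ hD₁₂₄ hD₂₁₄ hD₂₃ hD₁₂ hD₁p hD₂p
  have hQH : Q ≠ H := by
    rintro rfl
    exact h12 ((ht₁.eq_of_mem_of_mem_secant hE₂κ h12 hE₁e hE₂e hQt₁ hHe).symm.trans
      (ht₂.eq_of_mem_of_mem_secant hE₁κ h12.symm hE₂e hE₁e hQt₂ hHe))
  exact ⟨e12, t₁, t₂, E₁, E₂, Q, H, hP12, h12, hE₁κ, hE₂κ, hE₁e, hE₂e, ht₁, ht₂, hQt₁, hQt₂, hH,
    hQH, hQp, hHp⟩
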